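/- Distribution of the z-transformed intraclass correlation coefficient for one bivariate normal pair: let Z₁, Z₂ be independent standard normal random variables on a probability space, let μ ∈ ℝ, σ > 0, and ρ ∈ (−1, 1), and define X₁ = μ + σZ₁ and X₂ = μ + σ(ρZ₁ + √(1−ρ²)Z₂), so that (X₁, X₂) is bivariate normal with common mean μ, common variance σ², and correlation ρ. Let R = 2(X₁−μ)(X₂−μ)/((X₁−μ)² + (X₂−μ)²). Then the law of V = artanh(R) is the probability measure on ℝ with Lebesgue density v ↦ (1/π)·sech(v − artanh(ρ)) = 2/(π(e^{v − artanh ρ} + e^{-(v − artanh ρ)})). -/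

import Mathlib

open Real MeasureTheory ProbabilityTheory

/-- Fisher's z-transformation `artanh r = (1/2) log((1+r)/(1−r))`. -/
noncomputable def artanh (r : ℝ) : ℝ := (1 / 2) * Real.log ((1 + r) / (1 - r))

/-!
Put `W = ρ Z₁ + √(1 - ρ²) Z₂`. Then `R = 2 Z₁ W / (Z₁² + W²)`, so
`artanh R = log |Z₁ + W| - log |Z₁ - W|`. Writing `ρ = c² - t²` with `c² + t² = 1` and `c, t > 0`,
we get `Z₁ + W = 2c (c Z₁ + t Z₂)` and `Z₁ - W = 2t (t Z₁ - c Z₂)`. The pair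
`(U, U') = (c Z₁ + t Z₂, t Z₁ - c Z₂)` is the image of `(Z₁, Z₂)` under a reflection, so it is
again a pair of independent standard Gaussians: both are standard Gaussian, jointly Gaussian and
uncorrelated. Hence `V = log |U| - log |U'| + log (c / t)`, and `log (c / t) = artanh ρ`.
Finally `log |U|` has density `2 eᵘ φ(eᵘ)`, and integrating out `U'` (the inner integral is
`∫ |y| exp (-k y²) dy = 1 / k`) shows that `log |U| - log |U'|` has density `1 / (π cosh v)`.
-/

open Set
open scoped ENNReal

lemma lintegral_comp_abs (g : ℝ → ℝ≥0∞) :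
    ∫⁻ x, g |x| = 2 * ∫⁻ x in Ioi 0, g x := by
  have h_neg : ∫⁻ x in Iic 0, g |x| = ∫⁻ x in Ioi 0, g x := by
    rw [← (Measure.measurePreserving_neg volume).setLIntegral_comp_preimage_emb
      (Homeomorph.neg ℝ).measurableEmbedding, neg_preimage, neg_Iic, neg_zero,
      setLIntegral_congr Ioi_ae_eq_Ici.symm]
    exact setLIntegral_congr_fun measurableSet_Ioi fun x hx => by rw [abs_neg, abs_of_pos hx]
  rw [← lintegral_add_compl _ measurableSet_Ioi, compl_Ioi, h_neg, two_mul,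
    setLIntegral_congr_fun measurableSet_Ioi fun x (hx : 0 < x) => by rw [abs_of_pos hx]]

lemma lintegral_Ioi_eq_lintegral_exp (g : ℝ → ℝ≥0∞) :
    ∫⁻ x in Ioi 0, g x = ∫⁻ u, ENNReal.ofReal (exp u) * g (exp u) := by
  rw [← Real.range_exp, ← image_univ, lintegral_image_eq_lintegral_abs_deriv_mul
    MeasurableSet.univ (fun u _ => (hasDerivAt_exp u).hasDerivWithinAt) exp_injective.injOn,
    Measure.restrict_univ]
  simp_rw [abs_of_pos (exp_pos _)]

lemma map_add_const_withDensity (f : ℝ → ℝ≥0∞) (a : ℝ) :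
    (volume.withDensity f).map (· + a) = volume.withDensity fun v => f (v - a) := by
  ext s hs
  rw [Measure.map_apply (measurable_add_const a) hs,
    withDensity_apply _ (measurable_add_const a hs), withDensity_apply _ hs]
  simpa using ((measurePreserving_add_right volume a).setLIntegral_comp_preimage_emb
      (measurableEmbedding_addRight a) (fun v => f (v - a)) s)

lemma integral_Ioi_mul_exp_neg_mul_sq {k : ℝ} (hk : 0 < k) :
    ∫ y in Ioi 0, y * exp (-k * y ^ 2) = (2 * k)⁻¹ := by
  have h := integral_mul_cexp_neg_mul_sq (b := (k : ℂ)) (by simpa using hk)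
  have h_real (r : ℝ) : (r : ℂ) * Complex.exp (-k * r ^ 2) = ((r * exp (-k * r ^ 2) : ℝ) : ℂ) := by
    push_cast; rfl
  simp_rw [h_real, integral_complex_ofReal] at h
  exact_mod_cast h

lemma lintegral_abs_mul_exp_neg_mul_sq {k : ℝ} (hk : 0 < k) :
    ∫⁻ y, ENNReal.ofReal (|y| * exp (-k * y ^ 2)) = ENNReal.ofReal k⁻¹ := by
  have h_int : Integrable fun y : ℝ => |y| * exp (-k * y ^ 2) := by
    simpa [abs_mul] using (integrable_mul_exp_neg_mul_sq hk).abs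
  rw [← ofReal_integral_eq_lintegral_ofReal h_int (ae_of_all _ fun y => by positivity)]
  have := integral_comp_abs (f := fun y => y * exp (-k * y ^ 2))
  simp only [sq_abs] at this
  rw [this, integral_Ioi_mul_exp_neg_mul_sq hk]
  congr 1
  field_simp

lemma gaussianPDF_abs (x : ℝ) : gaussianPDF 0 1 |x| = gaussianPDF 0 1 x := by
  simp [gaussianPDF, gaussianPDFReal, sq_abs]

noncomputable def logAbsGaussianPDF (u : ℝ) : ℝ≥0∞ :=
  ENNReal.ofReal (2 * exp u * gaussianPDFReal 0 1 (exp u))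

@[fun_prop]
lemma measurable_logAbsGaussianPDF : Measurable logAbsGaussianPDF := by
  unfold logAbsGaussianPDF; fun_prop

lemma map_log_abs_gaussianReal :
    (gaussianReal 0 1).map (fun x => log |x|) = volume.withDensity logAbsGaussianPDF := by
  have hm : Measurable fun x : ℝ => log |x| := by fun_prop
  ext E hE
  rw [Measure.map_apply hm hE, gaussianReal_of_var_ne_zero 0 one_ne_zero,
    withDensity_apply _ (hm hE), withDensity_apply _ hE, ← lintegral_indicator (hm hE),
    ← lintegral_indicator hE]
  have h_abs (x : ℝ) : ((fun x => log |x|) ⁻¹' E).indicator (gaussianPDF 0 1) x =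
      (log ⁻¹' E).indicator (gaussianPDF 0 1) |x| := by
    classical
    rw [indicator_apply, indicator_apply, gaussianPDF_abs]
    rfl
  simp_rw [h_abs]
  rw [lintegral_comp_abs, lintegral_Ioi_eq_lintegral_exp, ← lintegral_const_mul' _ _ (by simp)]
  congr with u
  by_cases hu : u ∈ E
  · simp only [indicator, hu, mem_preimage, log_exp, if_true, gaussianPDF, logAbsGaussianPDF]
    rw [mul_assoc, ENNReal.ofReal_mul (by positivity), ENNReal.ofReal_mul (by positivity),
      ENNReal.ofReal_ofNat]
  · simp [indicator, hu]

lemma gaussianPDF_mul_logAbsGaussianPDF {y : ℝ} (hy : y ≠ 0) (v : ℝ) :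
    gaussianPDF 0 1 y * logAbsGaussianPDF (v + log |y|) =
      ENNReal.ofReal (exp v / π) * ENNReal.ofReal (|y| * exp (-((1 + exp v ^ 2) / 2) * y ^ 2)) := by
  have h_exp : exp (v + log |y|) = exp v * |y| := by
    rw [exp_add, exp_log (abs_pos.mpr hy)]
  have h_sqrt : (√(2 * π))⁻¹ * (√(2 * π))⁻¹ = (2 * π)⁻¹ := by
    rw [← mul_inv, mul_self_sqrt (by positivity)]
  rw [gaussianPDF, logAbsGaussianPDF, h_exp, ← ENNReal.ofReal_mul (gaussianPDFReal_nonneg _ _ _),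
    ← ENNReal.ofReal_mul (by positivity)]
  congr 1
  simp only [gaussianPDFReal, NNReal.coe_one, mul_one, sub_zero]
  rw [mul_pow, sq_abs, show -((1 + exp v ^ 2) / 2) * y ^ 2 = -y ^ 2 / 2 + -(exp v ^ 2 * y ^ 2) / 2
    by ring, exp_add]
  linear_combination (2 * exp v * |y| * exp (-y ^ 2 / 2) * exp (-(exp v ^ 2 * y ^ 2) / 2)) * h_sqrt

lemma lintegral_logAbsGaussianPDF_add_log_abs (v : ℝ) :
    ∫⁻ y, logAbsGaussianPDF (v + log |y|) ∂gaussianReal 0 1 = ENNReal.ofReal (π * cosh v)⁻¹ := by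
  rw [gaussianReal_of_var_ne_zero 0 one_ne_zero, lintegral_withDensity_eq_lintegral_mul _
    (measurable_gaussianPDF 0 1) (by fun_prop)]
  simp only [Pi.mul_apply]
  have hk : 0 < (1 + exp v ^ 2) / 2 := by positivity
  rw [lintegral_congr_ae ((Measure.ae_ne volume 0).mono fun y hy =>
      gaussianPDF_mul_logAbsGaussianPDF hy v),
    lintegral_const_mul' _ _ ENNReal.ofReal_ne_top, lintegral_abs_mul_exp_neg_mul_sq hk,
    ← ENNReal.ofReal_mul (by positivity), cosh_eq, exp_neg]
  congr 1
  field_simp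
  ring

lemma gaussianReal_preimage_log_abs_sub_const {E : Set ℝ} (hE : MeasurableSet E) (c : ℝ) :
    gaussianReal 0 1 ((fun x => log |x| - c) ⁻¹' E) = ∫⁻ v in E, logAbsGaussianPDF (v + c) := by
  have h_comp : (fun x => log |x| - c) = (· + -c) ∘ fun x => log |x| := by
    ext x; simp [sub_eq_add_neg]
  rw [← Measure.map_apply (by fun_prop) hE, h_comp, ← Measure.map_map (by fun_prop) (by fun_prop),
    map_log_abs_gaussianReal, map_add_const_withDensity, withDensity_apply _ hE]
  simp_rw [sub_neg_eq_add]

lemma map_log_abs_sub_log_abs_gaussianReal_prod :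
    ((gaussianReal 0 1).prod (gaussianReal 0 1)).map (fun p : ℝ × ℝ => log |p.1| - log |p.2|) =
      volume.withDensity fun v => ENNReal.ofReal (π * cosh v)⁻¹ := by
  have hG : Measurable fun p : ℝ × ℝ => log |p.1| - log |p.2| := by fun_prop
  ext E hE
  rw [Measure.map_apply hG hE, Measure.prod_apply_symm (hG hE), withDensity_apply _ hE]
  simp_rw [preimage_preimage, gaussianReal_preimage_log_abs_sub_const hE]
  rw [lintegral_lintegral_swap (by fun_prop)]
  simp_rw [lintegral_logAbsGaussianPDF_add_log_abs]

section Reflection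

variable {Ω : Type*} {mΩ : MeasurableSpace Ω} {P : Measure Ω} {X Y : Ω → ℝ}

lemma hasLaw_const_mul_add_const_mul_gaussianReal (hX : HasLaw X (gaussianReal 0 1) P)
    (hY : HasLaw Y (gaussianReal 0 1) P) (hXY : X ⟂ᵢ[P] Y) {a b : ℝ} (hab : a ^ 2 + b ^ 2 = 1) :
    HasLaw (fun ω => a * X ω + b * Y ω) (gaussianReal 0 1) P := by
  have hXY' : (fun ω => a * X ω) ⟂ᵢ[P] (fun ω => b * Y ω) :=
    hXY.comp (measurable_const_mul a) (measurable_const_mul b)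
  refine ⟨(hX.aemeasurable.const_mul a).add (hY.aemeasurable.const_mul b), ?_⟩
  rw [← Pi.add_def, gaussianReal_add_gaussianReal_of_indepFun hXY'
    (gaussianReal_const_mul hX a).map_eq (gaussianReal_const_mul hY b).map_eq]
  congr
  · simp
  · ext; simp [hab]

lemma hasLaw_reflection_gaussianReal_prod
    (hX : HasLaw X (gaussianReal 0 1) P) (hY : HasLaw Y (gaussianReal 0 1) P) (hXY : X ⟂ᵢ[P] Y)
    {c t : ℝ} (hct : c ^ 2 + t ^ 2 = 1) :
    HasLaw (fun ω => (c * X ω + t * Y ω, t * X ω - c * Y ω))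
      ((gaussianReal 0 1).prod (gaussianReal 0 1)) P := by
  have := hX.isProbabilityMeasure
  have hU := hasLaw_const_mul_add_const_mul_gaussianReal hX hY hXY hct
  have hU' : HasLaw (fun ω => t * X ω - c * Y ω) (gaussianReal 0 1) P := by
    simpa [sub_eq_add_neg] using
      hasLaw_const_mul_add_const_mul_gaussianReal hX hY hXY (a := t) (b := -c) (by linarith)
  refine IndepFun.hasLaw_prod hU hU' ?_
  let L : ℝ × ℝ →L[ℝ] ℝ × ℝ :=
    (c • ContinuousLinearMap.fst ℝ ℝ ℝ + t • ContinuousLinearMap.snd ℝ ℝ ℝ).prod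
      (t • ContinuousLinearMap.fst ℝ ℝ ℝ - c • ContinuousLinearMap.snd ℝ ℝ ℝ)
  have h_gauss : HasGaussianLaw (fun ω => (c * X ω + t * Y ω, t * X ω - c * Y ω)) P := by
    simpa [L] using
      ((hXY.hasGaussianLaw hX.hasGaussianLaw hY.hasGaussianLaw).map_fun L)
  refine h_gauss.indepFun_of_covariance_eq_zero ?_
  have hX2 : MemLp X 2 P := hX.hasGaussianLaw.memLp_two
  have hY2 : MemLp Y 2 P := hY.hasGaussianLaw.memLp_two
  show cov[(fun ω => c * X ω) + (fun ω => t * Y ω),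
    (fun ω => t * X ω) - (fun ω => c * Y ω); P] = 0
  rw [covariance_add_left (hX2.const_mul c) (hY2.const_mul t)
      ((hX2.const_mul t).sub (hY2.const_mul c)),
    covariance_sub_right (hX2.const_mul c) (hX2.const_mul t) (hY2.const_mul c),
    covariance_sub_right (hY2.const_mul t) (hX2.const_mul t) (hY2.const_mul c)]
  simp only [covariance_const_mul_left, covariance_const_mul_right,
    covariance_self hX.aemeasurable, covariance_self hY.aemeasurable, hX.variance_eq,
    hY.variance_eq, hXY.covariance_eq_zero hX2 hY2, hXY.symm.covariance_eq_zero hY2 hX2]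
  ring

end Reflection

lemma artanh_two_mul_mul_div_sq_add_sq {a b : ℝ} (h₁ : a + b ≠ 0) (h₂ : a - b ≠ 0) :
    _root_.artanh (2 * a * b / (a ^ 2 + b ^ 2)) = log |a + b| - log |a - b| := by
  have hab : a ^ 2 + b ^ 2 ≠ 0 := by
    intro h
    have ha : a = 0 := by nlinarith
    have hb : b = 0 := by nlinarith
    exact h₁ (by rw [ha, hb, add_zero])
  have h_add : 1 + 2 * a * b / (a ^ 2 + b ^ 2) = |a + b| ^ 2 / (a ^ 2 + b ^ 2) := by
    rw [sq_abs]; field_simp; ring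
  have h_sub : 1 - 2 * a * b / (a ^ 2 + b ^ 2) = |a - b| ^ 2 / (a ^ 2 + b ^ 2) := by
    rw [sq_abs]; field_simp; ring
  rw [_root_.artanh, h_add, h_sub, div_div_div_cancel_right₀ hab,
    log_div (by positivity) (by positivity), log_pow, log_pow]
  push_cast
  ring

lemma exists_pos_sq_add_sq_eq_one {ρ : ℝ} (hρ : ρ ∈ Ioo (-1 : ℝ) 1) :
    ∃ c t : ℝ, 0 < c ∧ 0 < t ∧ c ^ 2 + t ^ 2 = 1 ∧ ρ = c ^ 2 - t ^ 2 := by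
  obtain ⟨hρ₁, hρ₂⟩ := hρ
  refine ⟨√((1 + ρ) / 2), √((1 - ρ) / 2), sqrt_pos.2 (by linarith), sqrt_pos.2 (by linarith),
    ?_, ?_⟩ <;>
    rw [sq_sqrt (by linarith), sq_sqrt (by linarith)] <;> ring

lemma sqrt_one_sub_sq_sub_sq {c t : ℝ} (hc : 0 ≤ c) (ht : 0 ≤ t) (hct : c ^ 2 + t ^ 2 = 1) :
    √(1 - (c ^ 2 - t ^ 2) ^ 2) = 2 * c * t := by
  rw [show 1 - (c ^ 2 - t ^ 2) ^ 2 = (2 * c * t) ^ 2 by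
    linear_combination (-(1 + c ^ 2 + t ^ 2)) * hct, sqrt_sq (by positivity)]

lemma artanh_sq_sub_sq {c t : ℝ} (hc : 0 < c) (ht : 0 < t) (hct : c ^ 2 + t ^ 2 = 1) :
    _root_.artanh (c ^ 2 - t ^ 2) = log c - log t := by
  have h_ratio : (1 + (c ^ 2 - t ^ 2)) / (1 - (c ^ 2 - t ^ 2)) = (c / t) ^ 2 := by
    rw [← hct]; field_simp; ring
  rw [_root_.artanh, h_ratio, log_pow, log_div hc.ne' ht.ne']
  push_cast
  ring

lemma artanh_intraclass_eq_log_abs_sub_log_abs {c t σ x y : ℝ} (hc : 0 < c) (ht : 0 < t)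
    (hct : c ^ 2 + t ^ 2 = 1) (hσ : σ ≠ 0) (hu : c * x + t * y ≠ 0) (hv : t * x - c * y ≠ 0) :
    _root_.artanh (2 * (σ * x) * (σ * ((c ^ 2 - t ^ 2) * x + 2 * c * t * y)) /
        ((σ * x) ^ 2 + (σ * ((c ^ 2 - t ^ 2) * x + 2 * c * t * y)) ^ 2)) =
      log |c * x + t * y| - log |t * x - c * y| + (log c - log t) := by
  have h_sum : σ * x + σ * ((c ^ 2 - t ^ 2) * x + 2 * c * t * y) =
      2 * σ * c * (c * x + t * y) := by
    linear_combination -σ * x * hct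
  have h_diff : σ * x - σ * ((c ^ 2 - t ^ 2) * x + 2 * c * t * y) =
      2 * σ * t * (t * x - c * y) := by
    linear_combination -σ * x * hct
  rw [artanh_two_mul_mul_div_sq_add_sq (by rw [h_sum]; positivity) (by rw [h_diff]; positivity),
    h_sum, h_diff, abs_mul (2 * σ * c), abs_mul (2 * σ * t),
    log_mul (by positivity) (abs_ne_zero.2 hu), log_mul (by positivity) (abs_ne_zero.2 hv),
    abs_mul (2 * σ) c, abs_mul (2 * σ) t, abs_of_pos hc, abs_of_pos ht,
    log_mul (by positivity) hc.ne', log_mul (by positivity) ht.ne']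
  ring

theorem arctanh_intraclass_correlation_law_general
    {Ω : Type*} [MeasureSpace Ω]
    (Z₁ Z₂ : Ω → ℝ) (hZ₁ : Measurable Z₁) (hZ₂ : Measurable Z₂)
    (hindep : IndepFun Z₁ Z₂ ℙ)
    (hZ₁law : Measure.map Z₁ ℙ = gaussianReal 0 1)
    (hZ₂law : Measure.map Z₂ ℙ = gaussianReal 0 1)
    (μ σ ρ : ℝ) (hσ : 0 < σ) (hρ : ρ ∈ Set.Ioo (-1 : ℝ) 1)
    (X₁ X₂ : Ω → ℝ)
    (hX₁ : X₁ = fun ω => μ + σ * Z₁ ω)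
    (hX₂ : X₂ = fun ω => μ + σ * (ρ * Z₁ ω + Real.sqrt (1 - ρ ^ 2) * Z₂ ω))
    (R V : Ω → ℝ)
    (hR : R = fun ω =>
      2 * (X₁ ω - μ) * (X₂ ω - μ) / ((X₁ ω - μ) ^ 2 + (X₂ ω - μ) ^ 2))
    (hV : V = fun ω => _root_.artanh (R ω)) :
    Measure.map V ℙ = volume.withDensity fun v : ℝ =>
      ENNReal.ofReal
        (2 / (π * (Real.exp (v - _root_.artanh ρ) + Real.exp (-(v - _root_.artanh ρ))))) := by
  obtain ⟨c, t, hc, ht, hct, rfl⟩ := exists_pos_sq_add_sq_eq_one hρ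
  set ν := (gaussianReal 0 1).prod (gaussianReal 0 1)
  set L : Ω → ℝ × ℝ := fun ω => (c * Z₁ ω + t * Z₂ ω, t * Z₁ ω - c * Z₂ ω)
  have hL : HasLaw L ν ℙ :=
    hasLaw_reflection_gaussianReal_prod ⟨hZ₁.aemeasurable, hZ₁law⟩ ⟨hZ₂.aemeasurable, hZ₂law⟩
      hindep hct
  have : NullSingletonClass (gaussianReal 0 1) := nullSingletonClass_gaussianReal one_ne_zero
  have h_ne : ∀ᵐ ω ∂ℙ, (L ω).1 ≠ 0 ∧ (L ω).2 ≠ 0 :=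
    (hL.ae_iff (p := fun q => q.1 ≠ 0 ∧ q.2 ≠ 0) (by fun_prop)).2
      ((Measure.quasiMeasurePreserving_fst.ae (Measure.ae_ne _ 0)).and
        (Measure.quasiMeasurePreserving_snd.ae (Measure.ae_ne _ 0)))
  have h_V : V =ᵐ[ℙ] (fun q => log |q.1| - log |q.2| + (log c - log t)) ∘ L := by
    filter_upwards [h_ne] with ω ⟨hu, hv⟩
    simp only [hV, hR, hX₁, hX₂, sqrt_one_sub_sq_sub_sq hc.le ht.le hct, add_sub_cancel_left,
      Function.comp_apply]
    exact artanh_intraclass_eq_log_abs_sub_log_abs hc ht hct hσ.ne' hu hv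
  rw [Measure.map_congr h_V, ← AEMeasurable.map_map_of_aemeasurable (by fun_prop) hL.aemeasurable,
    hL.map_eq, show (fun q : ℝ × ℝ => log |q.1| - log |q.2| + (log c - log t)) =
      (· + (log c - log t)) ∘ fun q => log |q.1| - log |q.2| from rfl,
    ← Measure.map_map (measurable_add_const _) (by fun_prop),
    map_log_abs_sub_log_abs_gaussianReal_prod, map_add_const_withDensity,
    artanh_sq_sub_sq hc ht hct]
  congr with v
  rw [cosh_eq]
  congr 1
  field_simp

/-- Distribution of the z-transformed intraclass correlation coefficient for one
bivariate normal pair: if `X₁ = μ + σZ₁`, `X₂ = μ + σ(ρZ₁ + √(1−ρ²)Z₂)` with `Z₁, Z₂`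
independent standard normals, and `R = 2(X₁−μ)(X₂−μ)/((X₁−μ)² + (X₂−μ)²)`, then
`V = artanh R` has density `v ↦ (1/π) sech(v − artanh ρ)`. -/
theorem arctanh_intraclass_correlation_law
    {Ω : Type*} [MeasureSpace Ω] [IsProbabilityMeasure (ℙ : Measure Ω)]
    (Z₁ Z₂ : Ω → ℝ) (hZ₁ : Measurable Z₁) (hZ₂ : Measurable Z₂)
    (hindep : IndepFun Z₁ Z₂ ℙ)
    (hZ₁law : Measure.map Z₁ ℙ = gaussianReal 0 1)
    (hZ₂law : Measure.map Z₂ ℙ = gaussianReal 0 1)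
    (μ σ ρ : ℝ) (hσ : 0 < σ) (hρ : ρ ∈ Set.Ioo (-1 : ℝ) 1)
    (X₁ X₂ : Ω → ℝ)
    (hX₁ : X₁ = fun ω => μ + σ * Z₁ ω)
    (hX₂ : X₂ = fun ω => μ + σ * (ρ * Z₁ ω + Real.sqrt (1 - ρ ^ 2) * Z₂ ω))
    (R V : Ω → ℝ)
    (hR : R = fun ω =>
      2 * (X₁ ω - μ) * (X₂ ω - μ) / ((X₁ ω - μ) ^ 2 + (X₂ ω - μ) ^ 2))
    (hV : V = fun ω => _root_.artanh (R ω)) :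
    Measure.map V ℙ = volume.withDensity fun v : ℝ =>
      ENNReal.ofReal
        (2 / (π * (Real.exp (v - _root_.artanh ρ) + Real.exp (-(v - _root_.artanh ρ))))) :=
  arctanh_intraclass_correlation_law_general Z₁ Z₂ hZ₁ hZ₂ hindep hZ₁law hZ₂law μ σ ρ hσ hρ X₁ X₂
    hX₁ hX₂ R V hR hV
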